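/- arXiv:2302.12616 — 2 statements merged into one kernel-verified Lean document; each statement's English description precedes it below -/
import Mathlib

section
/- Let f_1,...,f_N, g_1,...,g_N, h be independent complex Gaussian random variables with f_n ~ CN(0, β_f), g_n ~ CN(0, β_g), h ~ CN(0, β_d). Then E[|Σ_{n=1}^N |f_n g_n| + |h||^2] = N^2 (π^2/16) β_f β_g + N(β_f β_g - (π^2/16) β_f β_g + (π^{3/2}/4)√(β_d β_f β_g)) + β_d. -/
/-!
Put `A n = ‖f n‖ * ‖g n‖` and `B = ‖h‖`. Independence gives `E[A n] = E‖f n‖ * E‖g n‖` and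
`E[(A n)²] = βf * βg`, and makes the `A n` pairwise independent and each independent of `B`.
Hence `E[(∑ A n + B)²] = N² E[A]² + N (Var A + 2 E[A] E[B]) + E[B²]`, where the variance of the
sum splits because of pairwise independence.

The Gaussian moments `E‖X‖ = √π / 2 * √v` and `E‖X‖² = v` of `X ~ CN(0, v)` come from the
density `(π v)⁻¹ exp (-‖z‖² / v)` and the polar-coordinates formula
`∫ ‖z‖ ^ p * exp (-b ‖z‖²) dz = π b ^ (-(p + 2) / 2) Γ (p / 2 + 1)`.
-/

open MeasureTheory ProbabilityTheory Real Filter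

noncomputable def complexGaussian (v : ℝ) : Measure ℂ :=
  ((gaussianReal 0 (Real.toNNReal (v / 2))).prod (gaussianReal 0 (Real.toNNReal (v / 2)))).map
    (fun p => Complex.equivRealProd.symm p)

namespace ProbabilityTheory

variable {Ω : Type*} [MeasurableSpace Ω] {μ : Measure Ω}

lemma IndepFun.integral_mul_sq {X Y : Ω → ℝ} (hXY : IndepFun X Y μ)
    (hX : AEStronglyMeasurable X μ) (hY : AEStronglyMeasurable Y μ) :
    ∫ ω, (X ω * Y ω) ^ 2 ∂μ = (∫ ω, X ω ^ 2 ∂μ) * ∫ ω, Y ω ^ 2 ∂μ := by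
  simp_rw [mul_pow]
  exact (hXY.comp (φ := (· ^ 2)) (ψ := (· ^ 2)) (by fun_prop) (by fun_prop)
    ).integral_fun_mul_eq_mul_integral (hX.pow 2) (hY.pow 2)

lemma IndepFun.memLp_two_mul {X Y : Ω → ℝ} (hXY : IndepFun X Y μ) (hX : MemLp X 2 μ)
    (hY : MemLp Y 2 μ) : MemLp (X * Y) 2 μ := by
  refine (memLp_two_iff_integrable_sq (hX.1.mul hY.1)).2 ?_
  simp_rw [Pi.mul_apply, mul_pow]
  exact (hXY.comp (φ := (· ^ 2)) (ψ := (· ^ 2)) (by fun_prop) (by fun_prop)).integrable_mul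
    hX.integrable_sq hY.integrable_sq

variable {ι E : Type*} [NormedAddCommGroup E] [MeasurableSpace E] [OpensMeasurableSpace E]
  {F : ι → Ω → E}

lemma IndepFun.norm {X Y : Ω → E} (hXY : IndepFun X Y μ) :
    IndepFun (fun ω => ‖X ω‖) (fun ω => ‖Y ω‖) μ :=
  hXY.comp measurable_norm measurable_norm

lemma iIndepFun.indepFun_norm_mul_norm (hF : iIndepFun F μ) (hFm : ∀ i, AEMeasurable (F i) μ)
    {i j k l : ι} (hik : i ≠ k) (hil : i ≠ l) (hjk : j ≠ k) (hjl : j ≠ l) :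
    IndepFun (fun ω => ‖F i ω‖ * ‖F j ω‖) (fun ω => ‖F k ω‖ * ‖F l ω‖) μ :=
  have hm : Measurable fun p : E × E => ‖p.1‖ * ‖p.2‖ := by fun_prop
  (hF.indepFun_prodMk_prodMk₀ hFm i j k l hik hil hjk hjl).comp hm hm

lemma iIndepFun.indepFun_norm_mul_norm_norm (hF : iIndepFun F μ)
    (hFm : ∀ i, AEMeasurable (F i) μ) {i j k : ι} (hik : i ≠ k) (hjk : j ≠ k) :
    IndepFun (fun ω => ‖F i ω‖ * ‖F j ω‖) (fun ω => ‖F k ω‖) μ :=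
  have hm : Measurable fun p : E × E => ‖p.1‖ * ‖p.2‖ := by fun_prop
  (hF.indepFun_prodMk₀ hFm i j k hik hjk).comp hm measurable_norm

end ProbabilityTheory

section SecondMoment

variable {Ω : Type*} [MeasurableSpace Ω] {μ : Measure Ω} [IsProbabilityMeasure μ]
  {ι : Type*} [Fintype ι] {X : ι → Ω → ℝ} {Y : Ω → ℝ}

lemma integral_sq_sum_add_of_indepFun (hX : ∀ i, MemLp (X i) 2 μ) (hY : MemLp Y 2 μ)
    (hXX : Pairwise fun i j => IndepFun (X i) (X j) μ) (hXY : ∀ i, IndepFun (X i) Y μ)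
    {a s b t : ℝ} (ha : ∀ i, ∫ ω, X i ω ∂μ = a) (hs : ∀ i, ∫ ω, X i ω ^ 2 ∂μ = s)
    (hb : ∫ ω, Y ω ∂μ = b) (ht : ∫ ω, Y ω ^ 2 ∂μ = t) :
    ∫ ω, (∑ i, X i ω + Y ω) ^ 2 ∂μ =
      Fintype.card ι ^ 2 * a ^ 2 + Fintype.card ι * (s - a ^ 2 + 2 * a * b) + t := by
  set n : ℝ := (Fintype.card ι : ℝ)
  set S := ∑ i, X i
  have hSω (ω : Ω) : S ω = ∑ i, X i ω := Finset.sum_apply ..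
  have hS : MemLp S 2 μ := memLp_finsetSum' _ fun i _ => hX i
  have hES : ∫ ω, S ω ∂μ = n * a := by
    simp only [hSω]
    rw [integral_finsetSum _ fun i _ => (hX i).integrable one_le_two]
    simp [n, ha]
  have hES2 : ∫ ω, S ω ^ 2 ∂μ = n * (s - a ^ 2) + (n * a) ^ 2 := by
    have hvar := variance_eq_sub hS
    rw [IndepFun.variance_sum (fun i _ => hX i) fun i _ j _ hij => hXX hij] at hvar
    simp only [variance_eq_sub (hX _), Pi.pow_apply, hs, ha, hES, Finset.sum_const,
      Finset.card_univ, nsmul_eq_mul] at hvar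
    linarith
  have hESY : ∫ ω, S ω * Y ω ∂μ = n * (a * b) := by
    simp only [hSω, Finset.sum_mul]
    rw [integral_finsetSum (f := fun i ω => X i ω * Y ω) _ fun i _ => (hX i).integrable_mul hY]
    simp [(hXY _).integral_fun_mul_eq_mul_integral (hX _).1 hY.1, n, ha, hb]
  have hS2 : Integrable (fun ω => S ω ^ 2) μ := hS.integrable_sq
  have hSY : Integrable (fun ω => 2 * (S ω * Y ω)) μ := (hS.integrable_mul hY).const_mul 2
  calc ∫ ω, (∑ i, X i ω + Y ω) ^ 2 ∂μ
        = ∫ ω, S ω ^ 2 + 2 * (S ω * Y ω) + Y ω ^ 2 ∂μ := by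
        congr with ω
        rw [hSω]
        ring
    _ = n * (s - a ^ 2) + (n * a) ^ 2 + 2 * (n * (a * b)) + t := by
        rw [integral_add (f := fun ω => S ω ^ 2 + 2 * (S ω * Y ω)) (hS2.add hSY)
          hY.integrable_sq, integral_add hS2 hSY, integral_const_mul, hES2, hESY, ht]
    _ = n ^ 2 * a ^ 2 + n * (s - a ^ 2 + 2 * a * b) + t := by ring

end SecondMoment

lemma complexGaussian_eq_map (v : ℝ) :
    complexGaussian v = ((gaussianReal 0 (v / 2).toNNReal).prod
      (gaussianReal 0 (v / 2).toNNReal)).map Complex.measurableEquivRealProd.symm := rfl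

instance isProbabilityMeasure_complexGaussian (v : ℝ) :
    IsProbabilityMeasure (complexGaussian v) := by
  rw [complexGaussian_eq_map]
  exact Measure.isProbabilityMeasure_map
    Complex.measurableEquivRealProd.symm.measurable.aemeasurable

lemma complexGaussian_zero : complexGaussian 0 = Measure.dirac 0 := by
  rw [complexGaussian_eq_map, zero_div, Real.toNNReal_zero, gaussianReal_zero_var,
    Measure.dirac_prod_dirac, Measure.map_dirac' Complex.measurableEquivRealProd.symm.measurable]
  rfl

lemma gaussianPDFReal_mul_gaussianPDFReal {v : ℝ} (hv : 0 < v) (x y : ℝ) :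
    gaussianPDFReal 0 (v / 2).toNNReal x * gaussianPDFReal 0 (v / 2).toNNReal y
      = (π * v)⁻¹ * rexp (-(x ^ 2 + y ^ 2) / v) := by
  have hw : ((v / 2).toNNReal : ℝ) = v / 2 := Real.coe_toNNReal _ (by positivity)
  have hs : √(2 * π * (v / 2)) * √(2 * π * (v / 2)) = π * v := by
    rw [Real.mul_self_sqrt (by positivity)]
    ring
  simp only [gaussianPDFReal_def, hw, sub_zero]
  rw [← mul_mul_mul_comm, ← mul_inv, hs, ← Real.exp_add]
  congr 2
  field_simp
  ring

lemma complexGaussian_eq_withDensity {v : ℝ} (hv : 0 < v) :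
    complexGaussian v =
      volume.withDensity fun z => ENNReal.ofReal ((π * v)⁻¹ * rexp (-‖z‖ ^ 2 / v)) := by
  have hw : (v / 2).toNNReal ≠ 0 := by simpa using hv
  let e := Complex.measurableEquivRealProd
  have he : MeasurePreserving e.symm := Complex.volume_preserving_equiv_real_prod.symm
  rw [complexGaussian_eq_map, gaussianReal_of_var_ne_zero _ hw,
    prod_withDensity (measurable_gaussianPDF _ _) (measurable_gaussianPDF _ _),
    ← Measure.volume_eq_prod]
  ext s hs
  rw [Measure.map_apply e.symm.measurable hs, withDensity_apply _ (e.symm.measurable hs),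
    withDensity_apply _ hs, ← he.setLIntegral_comp_preimage_emb e.symm.measurableEmbedding]
  refine setLIntegral_congr_fun (e.symm.measurable hs) fun p _ => ?_
  simp only [gaussianPDF_def]
  rw [← ENNReal.ofReal_mul (gaussianPDFReal_nonneg _ _ _), gaussianPDFReal_mul_gaussianPDFReal hv]
  congr 3
  rw [Complex.sq_norm, Complex.normSq_apply]
  simp [e, Complex.measurableEquivRealProd, pow_two]

lemma integral_norm_rpow_complexGaussian {v p : ℝ} (hv : 0 ≤ v) (hp : 0 < p) :
    ∫ z, ‖z‖ ^ p ∂complexGaussian v = Real.Gamma (p / 2 + 1) * v ^ (p / 2) := by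
  rcases hv.eq_or_lt with rfl | hv
  · rw [complexGaussian_zero, integral_dirac, norm_zero, Real.zero_rpow hp.ne',
      Real.zero_rpow (by positivity), mul_zero]
  have hdens : Measurable fun z : ℂ => ENNReal.ofReal ((π * v)⁻¹ * rexp (-‖z‖ ^ 2 / v)) := by
    fun_prop
  rw [complexGaussian_eq_withDensity hv, integral_withDensity_eq_integral_toReal_smul hdens
    (ae_of_all _ fun _ => ENNReal.ofReal_lt_top)]
  have hintegrand (z : ℂ) :
      (ENNReal.ofReal ((π * v)⁻¹ * rexp (-‖z‖ ^ 2 / v))).toReal • ‖z‖ ^ p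
        = (π * v)⁻¹ * (‖z‖ ^ p * rexp (-v⁻¹ * ‖z‖ ^ (2 : ℝ))) := by
    rw [ENNReal.toReal_ofReal (by positivity), smul_eq_mul, Real.rpow_two]
    ring_nf
  simp_rw [hintegrand]
  rw [integral_const_mul, Complex.integral_rpow_mul_exp_neg_mul_rpow one_le_two (by linarith)
    (inv_pos.2 hv), Real.inv_rpow hv.le, neg_div, Real.rpow_neg hv.le, inv_inv,
    show (p + 2) / 2 = p / 2 + 1 by ring, Real.rpow_add_one hv.ne']
  field_simp

lemma integrable_norm_rpow_complexGaussian {v p : ℝ} (hv : 0 ≤ v) (hp : 0 < p) :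
    Integrable (fun z => ‖z‖ ^ p) (complexGaussian v) := by
  rcases hv.eq_or_lt with rfl | hv
  · rw [complexGaussian_zero]
    exact integrable_dirac (by simp)
  -- the Bochner integral of a non-integrable function is `0`
  refine .of_integral_ne_zero ?_
  rw [integral_norm_rpow_complexGaussian hv.le hp]
  have := Real.Gamma_pos_of_pos (show 0 < p / 2 + 1 by positivity)
  positivity

lemma memLp_norm_complexGaussian {v : ℝ} (hv : 0 ≤ v) :
    MemLp (fun z => ‖z‖) 2 (complexGaussian v) :=
  (memLp_two_iff_integrable_sq continuous_norm.aestronglyMeasurable).2 <| by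
    simpa using integrable_norm_rpow_complexGaussian hv two_pos

lemma integral_norm_complexGaussian {v : ℝ} (hv : 0 ≤ v) :
    ∫ z, ‖z‖ ∂complexGaussian v = √π / 2 * √v := by
  have h := integral_norm_rpow_complexGaussian hv one_pos
  rw [Real.Gamma_add_one (by norm_num), Real.Gamma_one_half_eq, ← Real.sqrt_eq_rpow] at h
  simp only [Real.rpow_one] at h
  rw [h]
  ring

lemma integral_norm_sq_complexGaussian {v : ℝ} (hv : 0 ≤ v) :
    ∫ z, ‖z‖ ^ 2 ∂complexGaussian v = v := by
  simpa [one_add_one_eq_two] using integral_norm_rpow_complexGaussian hv two_pos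

section ComplexGaussianRandomVariable

variable {Ω : Type*} [MeasurableSpace Ω] {P : Measure Ω} {X Y : Ω → ℂ} {v w : ℝ}

lemma aemeasurable_of_map_eq_complexGaussian (hX : P.map X = complexGaussian v) :
    AEMeasurable X P := by
  by_contra h
  rw [Measure.map_of_not_aemeasurable h] at hX
  exact IsProbabilityMeasure.ne_zero _ hX.symm

lemma memLp_norm_of_map_eq_complexGaussian (hv : 0 ≤ v) (hX : P.map X = complexGaussian v) :
    MemLp (fun ω => ‖X ω‖) 2 P := by
  have h := memLp_norm_complexGaussian hv
  rw [← hX] at h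
  exact h.comp_of_map (aemeasurable_of_map_eq_complexGaussian hX)

lemma integral_norm_of_map_eq_complexGaussian (hv : 0 ≤ v) (hX : P.map X = complexGaussian v) :
    ∫ ω, ‖X ω‖ ∂P = √π / 2 * √v := by
  rw [← integral_norm_complexGaussian hv, ← hX,
    integral_map (aemeasurable_of_map_eq_complexGaussian hX) (by fun_prop)]

lemma integral_norm_sq_of_map_eq_complexGaussian (hv : 0 ≤ v)
    (hX : P.map X = complexGaussian v) : ∫ ω, ‖X ω‖ ^ 2 ∂P = v := by
  rw [← integral_norm_sq_complexGaussian hv, ← hX,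
    integral_map (aemeasurable_of_map_eq_complexGaussian hX) (by fun_prop)]

variable (hXY : IndepFun X Y P) (hv : 0 ≤ v) (hw : 0 ≤ w) (hX : P.map X = complexGaussian v)
  (hY : P.map Y = complexGaussian w)
include hXY hv hw hX hY

lemma memLp_norm_mul_norm_of_map_eq_complexGaussian :
    MemLp (fun ω => ‖X ω‖ * ‖Y ω‖) 2 P :=
  hXY.norm.memLp_two_mul
    (memLp_norm_of_map_eq_complexGaussian hv hX) (memLp_norm_of_map_eq_complexGaussian hw hY)

lemma integral_norm_mul_norm_of_map_eq_complexGaussian :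
    ∫ ω, ‖X ω‖ * ‖Y ω‖ ∂P = √π / 2 * √v * (√π / 2 * √w) := by
  rw [hXY.norm.integral_fun_mul_eq_mul_integral
    (memLp_norm_of_map_eq_complexGaussian hv hX).1 (memLp_norm_of_map_eq_complexGaussian hw hY).1,
    integral_norm_of_map_eq_complexGaussian hv hX, integral_norm_of_map_eq_complexGaussian hw hY]

lemma integral_sq_norm_mul_norm_of_map_eq_complexGaussian :
    ∫ ω, (‖X ω‖ * ‖Y ω‖) ^ 2 ∂P = v * w := by
  rw [hXY.norm.integral_mul_sq
    (memLp_norm_of_map_eq_complexGaussian hv hX).1 (memLp_norm_of_map_eq_complexGaussian hw hY).1,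
    integral_norm_sq_of_map_eq_complexGaussian hv hX,
    integral_norm_sq_of_map_eq_complexGaussian hw hY]

end ComplexGaussianRandomVariable

theorem stmt0 {Ω : Type*} [MeasurableSpace Ω] (P : Measure Ω) [IsProbabilityMeasure P]
    (N : ℕ) (βf βg βd : ℝ) (hβf : 0 ≤ βf) (hβg : 0 ≤ βg) (hβd : 0 ≤ βd)
    (f g : Fin N → Ω → ℂ) (h : Ω → ℂ)
    (hf : ∀ n, P.map (f n) = complexGaussian βf)
    (hg : ∀ n, P.map (g n) = complexGaussian βg)
    (hh : P.map h = complexGaussian βd)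
    (hindep : iIndepFun
      (Sum.elim (Sum.elim f g) (fun _ : Unit => h)) P) :
    ∫ ω, (∑ n, ‖f n ω * g n ω‖ + ‖h ω‖) ^ 2 ∂P =
      (N : ℝ) ^ 2 * (π ^ 2 / 16) * (βf * βg) +
        (N : ℝ) * (βf * βg - (π ^ 2 / 16) * (βf * βg) +
          (π ^ (3 / 2 : ℝ) / 4) * Real.sqrt (βd * (βf * βg))) + βd := by
  have hFm : ∀ i, AEMeasurable (Sum.elim (Sum.elim f g) (fun _ : Unit => h) i) P := by
    rintro ((n | n) | _)
    exacts [aemeasurable_of_map_eq_complexGaussian (hf n),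
      aemeasurable_of_map_eq_complexGaussian (hg n), aemeasurable_of_map_eq_complexGaussian hh]
  have hfg (n : Fin N) : IndepFun (f n) (g n) P :=
    hindep.indepFun (i := .inl (.inl n)) (j := .inl (.inr n)) (by simp)
  simp only [norm_mul]
  rw [integral_sq_sum_add_of_indepFun (X := fun n ω => ‖f n ω‖ * ‖g n ω‖)
    (fun n => memLp_norm_mul_norm_of_map_eq_complexGaussian (hfg n) hβf hβg (hf n) (hg n))
    (memLp_norm_of_map_eq_complexGaussian hβd hh)
    (fun n m hnm => hindep.indepFun_norm_mul_norm hFm (i := .inl (.inl n)) (j := .inl (.inr n))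
      (k := .inl (.inl m)) (l := .inl (.inr m)) (by simpa) (by simp) (by simp) (by simpa))
    (fun n => hindep.indepFun_norm_mul_norm_norm hFm (i := .inl (.inl n)) (j := .inl (.inr n))
      (k := .inr ()) (by simp) (by simp))
    (fun n => integral_norm_mul_norm_of_map_eq_complexGaussian (hfg n) hβf hβg (hf n) (hg n))
    (fun n => integral_sq_norm_mul_norm_of_map_eq_complexGaussian (hfg n) hβf hβg (hf n) (hg n))
    (integral_norm_of_map_eq_complexGaussian hβd hh)
    (integral_norm_sq_of_map_eq_complexGaussian hβd hh), Fintype.card_fin,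
    show π ^ (3 / 2 : ℝ) = π * √π by
      rw [show (3 / 2 : ℝ) = 1 + 1 / 2 by norm_num, Real.rpow_add pi_pos, Real.rpow_one,
        Real.sqrt_eq_rpow],
    Real.sqrt_mul hβd, Real.sqrt_mul hβf]
  have hπ := Real.sq_sqrt pi_pos.le
  have hf2 := Real.sq_sqrt hβf
  have hg2 := Real.sq_sqrt hβg
  -- hiding the square roots makes the rewrites below touch only the bare `π`, `βf`, `βg`
  set r := √π
  set F := √βf
  set G := √βg
  rw [← hπ, ← hf2, ← hg2]
  ring
end

section
/- Fix β_d > 0 and β̃ > 0. For N ∈ ℕ let F̄_N(z) denote the CCDF: F̄_N(z) = 1 − (1/(Nβ̃+2)) e^{z/β_d} for z < 0 and F̄_N(z) = ((Nβ̃+1)/(Nβ̃+2)) e^{−z/(β_d(1+Nβ̃))} for z ≥ 0. Then for all M > N ≥ 1 and all z ∈ ℝ, F̄_M(z) ≥ F̄_N(z); i.e., the family {Z_N} is stochastically increasing in N. -/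
/-!
Write `s = N β̃`. Both branches of `F̄_N` are monotone in `s ≥ 0`: for `z < 0` the weight `1/(s+2)`
of the subtracted exponential decreases, and for `z ≥ 0` both the mass `(s+1)/(s+2)` of the positive
half-line and the decay scale `β_d (1+s)` of its exponential tail increase.
-/

open Real

/-- The CCDF of `X - Y` for independent exponentials `X`, `Y` with means `βd (1 + s)` and `βd`;
the paper's `F̄_N` is `diffExpCCDF βd (N * β̃)`. -/
noncomputable def diffExpCCDF (βd s z : ℝ) : ℝ :=
  if z < 0 then 1 - 1 / (s + 2) * exp (z / βd)
  else (s + 1) / (s + 2) * exp (-z / (βd * (1 + s)))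

lemma one_div_add_two_anti {s t : ℝ} (hs : 0 ≤ s) (hst : s ≤ t) :
    1 / (t + 2) ≤ 1 / (s + 2) :=
  one_div_le_one_div_of_le (by linarith) (by linarith)

lemma add_one_div_add_two_mono {s t : ℝ} (hs : 0 ≤ s) (hst : s ≤ t) :
    (s + 1) / (s + 2) ≤ (t + 1) / (t + 2) := by
  have one_sub_form (u : ℝ) (hu : 0 ≤ u) : (u + 1) / (u + 2) = 1 - 1 / (u + 2) := by
    field_simp
    ring
  rw [one_sub_form s hs, one_sub_form t (hs.trans hst)]
  linarith [one_div_add_two_anti hs hst]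

lemma exp_neg_div_mono {βd s t z : ℝ} (hβd : 0 < βd) (hs : 0 ≤ s) (hst : s ≤ t) (hz : 0 ≤ z) :
    exp (-z / (βd * (1 + s))) ≤ exp (-z / (βd * (1 + t))) := by
  have hβs : 0 < βd * (1 + s) := mul_pos hβd (by linarith)
  rw [neg_div, neg_div]
  gcongr

lemma diffExpCCDF_mono {βd s t : ℝ} (hβd : 0 < βd) (hs : 0 ≤ s) (hst : s ≤ t) (z : ℝ) :
    diffExpCCDF βd s z ≤ diffExpCCDF βd t z := by
  unfold diffExpCCDF
  split_ifs with hz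
  · exact sub_le_sub_left
      (mul_le_mul_of_nonneg_right (one_div_add_two_anti hs hst) (exp_pos _).le) 1
  · exact mul_le_mul (add_one_div_add_two_mono hs hst)
      (exp_neg_div_mono hβd hs hst (not_lt.mp hz)) (exp_pos _).le
      (div_nonneg (by linarith) (by linarith))

theorem stmt10 (βd βt : ℝ) (hβd : 0 < βd) (hβt : 0 < βt) (F : ℕ → ℝ → ℝ)
    (hF : ∀ N z, F N z = if z < 0 then 1 - (1 / ((N : ℝ) * βt + 2)) * Real.exp (z / βd)
      else (((N : ℝ) * βt + 1) / ((N : ℝ) * βt + 2)) *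
        Real.exp (-z / (βd * (1 + (N : ℝ) * βt)))) :
    ∀ M N : ℕ, 1 ≤ N → N < M → ∀ z : ℝ, F N z ≤ F M z := by
  intro M N _ hNM z
  have hF' (K : ℕ) : F K z = diffExpCCDF βd (K * βt) z := hF K z
  rw [hF', hF']
  exact diffExpCCDF_mono hβd (mul_nonneg N.cast_nonneg hβt.le) (by gcongr) z
end
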